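/- Assume τ > 0 (equivalently q < p*(n)). Then the following are equivalent: (i) there exist real numbers 0 < B < C such that Σ(u) < 0 for u ∈ (0,B), Σ(u) > 0 for u ∈ (B,C), and Σ(u) < 0 for u ∈ (C,∞); (ii) ω < ω_{σ,τ,p,q} := σ·((q-p)/(q-1))·(σ(p-1)/(τ(q-1)))^{(p-1)/(q-p)}. -/

import Mathlib

/-!
For `u > 0` write `Σ(u) = 2u² (h(u) - ω)` with `h(u) = σ u^{p-1} - τ u^{q-1}`, so `Σ` has
the sign of `h - ω`. Here `σ ≥ τ > 0` since `p < q`, and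
`h'(u) = (q-1) τ u^{p-2} (U^{q-p} - u^{q-p})` with `U^{q-p} = σ(p-1)/(τ(q-1))`:
`h` increases on `(0, U]` and decreases on `[U, ∞)`, tends to `0 < ω` at `0` and to `-∞`
at `∞`, and its maximum `h(U)` is exactly `ω_{σ,τ,p,q}`. Hence `h - ω` changes sign twice,
at points `B < U < C` given by the intermediate value theorem, precisely when `ω < h(U)`.
-/

/-- `σ = n/(p+1) - (n-2)/2`. -/
noncomputable def sigma (n : ℕ) (p : ℝ) : ℝ := n / (p + 1) - ((n : ℝ) - 2) / 2

/-- `τ = n/(q+1) - (n-2)/2`. -/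
noncomputable def tau (n : ℕ) (q : ℝ) : ℝ := n / (q + 1) - ((n : ℝ) - 2) / 2

/-- The Pohozaev polynomial `Σ(u) = -2ω u² + 2σ u^{p+1} - 2τ u^{q+1}`. -/
noncomputable def Sig (n : ℕ) (ω p q u : ℝ) : ℝ :=
  -2 * ω * u ^ 2 + 2 * sigma n p * u ^ (p + 1) - 2 * tau n q * u ^ (q + 1)

/-- The critical frequency `ω_{σ,τ,p,q}`. -/
noncomputable def omegaSig (n : ℕ) (p q : ℝ) : ℝ :=
  sigma n p * ((q - p) / (q - 1)) *
    ((sigma n p * (p - 1)) / (tau n q * (q - 1))) ^ ((p - 1) / (q - p))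

open Set Filter Topology

def CrossesTwice (f : ℝ → ℝ) (c : ℝ) : Prop :=
  ∃ B C : ℝ, 0 < B ∧ B < C ∧
    (∀ u, 0 < u → u < B → f u < c) ∧
    (∀ u, B < u → u < C → c < f u) ∧
    (∀ u, C < u → f u < c)

theorem CrossesTwice.congr {f g : ℝ → ℝ} {c d : ℝ}
    (h : ∀ u, 0 < u → (f u < c ↔ g u < d) ∧ (c < f u ↔ d < g u)) :
    CrossesTwice f c ↔ CrossesTwice g d := by
  constructor <;> rintro ⟨B, C, hB, hBC, hlow, hmid, hhigh⟩
  · exact ⟨B, C, hB, hBC, fun u hu huB ↦ (h u hu).1.1 (hlow u hu huB),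
      fun u hBu huC ↦ (h u (hB.trans hBu)).2.1 (hmid u hBu huC),
      fun u hCu ↦ (h u (hB.trans (hBC.trans hCu))).1.1 (hhigh u hCu)⟩
  · exact ⟨B, C, hB, hBC, fun u hu huB ↦ (h u hu).1.2 (hlow u hu huB),
      fun u hBu huC ↦ (h u (hB.trans hBu)).2.2 (hmid u hBu huC),
      fun u hCu ↦ (h u (hB.trans (hBC.trans hCu))).1.2 (hhigh u hCu)⟩

theorem StrictMonoOn.le_of_strictAntiOn {f : ℝ → ℝ} {U u : ℝ}
    (hmono : StrictMonoOn f (Ioc 0 U)) (hanti : StrictAntiOn f (Ici U)) (hU : 0 < U)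
    (hu : 0 < u) : f u ≤ f U := by
  rcases le_or_gt u U with huU | hUu
  · exact hmono.monotoneOn ⟨hu, huU⟩ ⟨hU, le_rfl⟩ huU
  · exact (hanti self_mem_Ici hUu.le hUu).le

theorem crossesTwice_iff_lt_of_unimodal {f : ℝ → ℝ} {U c : ℝ} (hU : 0 < U)
    (hcont : ContinuousOn f (Ioi 0)) (hmono : StrictMonoOn f (Ioc 0 U))
    (hanti : StrictAntiOn f (Ici U)) (hzero : ∀ᶠ u in 𝓝[>] 0, f u < c)
    (htop : ∀ᶠ u in atTop, f u < c) :
    CrossesTwice f c ↔ c < f U := by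
  constructor
  · rintro ⟨B, C, hB, hBC, -, hmid, -⟩
    exact (hmid _ (left_lt_add_div_two.2 hBC) (add_div_two_lt_right.2 hBC)).trans_le
      (hmono.le_of_strictAntiOn hanti hU (by linarith))
  intro hc
  obtain ⟨a, hfa, ha, haU⟩ := (hzero.and (Ioo_mem_nhdsGT hU)).exists
  obtain ⟨b, hfb, hUb⟩ := (htop.and (eventually_gt_atTop U)).exists
  obtain ⟨B, ⟨haB, hBU⟩, hfB⟩ := intermediate_value_Ioo haU.le
    (hcont.mono fun x hx ↦ ha.trans_le hx.1) ⟨hfa, hc⟩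
  obtain ⟨C, ⟨hUC, -⟩, hfC⟩ := intermediate_value_Ioo' hUb.le
    (hcont.mono fun x hx ↦ hU.trans_le hx.1) ⟨hfb, hc⟩
  have hB : 0 < B := ha.trans haB
  refine ⟨B, C, hB, hBU.trans hUC, fun u hu huB ↦ ?_, fun u hBu huC ↦ ?_, fun u hCu ↦ ?_⟩
  · exact hfB ▸ hmono ⟨hu, huB.le.trans hBU.le⟩ ⟨hB, hBU.le⟩ huB
  · rcases le_or_gt u U with huU | hUu
    · exact hfB ▸ hmono ⟨hB, hBU.le⟩ ⟨hB.trans hBu, huU⟩ hBu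
    · exact hfC ▸ hanti hUu.le hUC.le huC
  · exact hfC ▸ hanti hUC.le (hUC.le.trans hCu.le) hCu

noncomputable def reducedSig (σ τ p q u : ℝ) : ℝ := σ * u ^ (p - 1) - τ * u ^ (q - 1)

noncomputable def reducedSigArgmax (σ τ p q : ℝ) : ℝ :=
  (σ * (p - 1) / (τ * (q - 1))) ^ (q - p)⁻¹

section reducedSig

variable {σ τ p q : ℝ}

theorem reducedSig_eq_mul {u : ℝ} (hu : 0 < u) :
    reducedSig σ τ p q u = u ^ (p - 1) * (σ - τ * u ^ (q - p)) := by
  rw [reducedSig, mul_sub, ← mul_assoc, mul_comm _ τ, mul_assoc, ← Real.rpow_add hu,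
    sub_add_sub_cancel', mul_comm]

theorem continuous_reducedSig (hp : 1 ≤ p) (hq : 1 ≤ q) : Continuous (reducedSig σ τ p q) :=
  ((Real.continuous_rpow_const (by linarith)).const_mul σ).sub
    ((Real.continuous_rpow_const (by linarith)).const_mul τ)

theorem reducedSig_zero (hp : 1 < p) (hq : 1 < q) : reducedSig σ τ p q 0 = 0 := by
  simp [reducedSig, Real.zero_rpow (sub_ne_zero.2 hp.ne'), Real.zero_rpow (sub_ne_zero.2 hq.ne')]

theorem eventually_reducedSig_lt_nhdsGT_zero {ω : ℝ} (hp : 1 < p) (hpq : p < q) (hω : 0 < ω) :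
    ∀ᶠ u in 𝓝[>] 0, reducedSig σ τ p q u < ω := by
  have hq : 1 < q := hp.trans hpq
  refine (((continuous_reducedSig hp.le hq.le).tendsto 0).mono_left nhdsWithin_le_nhds).eventually
    (gt_mem_nhds ?_)
  rwa [reducedSig_zero hp hq]

theorem tendsto_reducedSig_atTop (hτ : 0 < τ) (hp : 1 < p) (hpq : p < q) :
    Tendsto (reducedSig σ τ p q) atTop atBot := by
  have hbracket : Tendsto (fun u : ℝ ↦ σ - τ * u ^ (q - p)) atTop atBot := by
    refine (tendsto_atBot_add_const_left _ σ (tendsto_neg_atTop_atBot.comp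
      ((tendsto_rpow_atTop (y := q - p) (by linarith)).const_mul_atTop hτ))).congr fun u ↦ ?_
    exact (sub_eq_add_neg _ _).symm
  refine ((tendsto_rpow_atTop (y := p - 1) (by linarith)).atTop_mul_atBot₀ hbracket).congr' ?_
  filter_upwards [eventually_gt_atTop 0] with u hu
  exact (reducedSig_eq_mul hu).symm

theorem reducedSigArgmax_rpow (hσ : 0 < σ) (hτ : 0 < τ) (hp : 1 < p) (hpq : p < q) :
    reducedSigArgmax σ τ p q ^ (q - p) = σ * (p - 1) / (τ * (q - 1)) := by
  have hratio : 0 < σ * (p - 1) / (τ * (q - 1)) :=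
    div_pos (mul_pos hσ (by linarith)) (mul_pos hτ (by linarith))
  rw [reducedSigArgmax, ← Real.rpow_mul hratio.le, inv_mul_cancel₀ (by linarith), Real.rpow_one]

theorem reducedSigArgmax_pos (hσ : 0 < σ) (hτ : 0 < τ) (hp : 1 < p) (hpq : p < q) :
    0 < reducedSigArgmax σ τ p q :=
  Real.rpow_pos_of_pos (div_pos (mul_pos hσ (by linarith)) (mul_pos hτ (by linarith))) _

theorem hasDerivAt_reducedSig (hσ : 0 < σ) (hτ : 0 < τ) (hp : 1 < p) (hpq : p < q) {u : ℝ}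
    (hu : 0 < u) :
    HasDerivAt (reducedSig σ τ p q)
      (u ^ (p - 2) * (τ * (q - 1)) * (reducedSigArgmax σ τ p q ^ (q - p) - u ^ (q - p))) u := by
  have hderiv := ((Real.hasDerivAt_rpow_const (p := p - 1) (Or.inl hu.ne')).const_mul σ).sub
    ((Real.hasDerivAt_rpow_const (p := q - 1) (Or.inl hu.ne')).const_mul τ)
  refine hderiv.congr_deriv ?_
  rw [reducedSigArgmax_rpow hσ hτ hp hpq, show q - 1 - 1 = p - 2 + (q - p) by ring,
    Real.rpow_add hu, show p - 1 - 1 = p - 2 by ring]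
  have : q - 1 ≠ 0 := by linarith
  field_simp

theorem strictMonoOn_reducedSig (hσ : 0 < σ) (hτ : 0 < τ) (hp : 1 < p) (hpq : p < q) :
    StrictMonoOn (reducedSig σ τ p q) (Ioc 0 (reducedSigArgmax σ τ p q)) := by
  refine strictMonoOn_of_deriv_pos (convex_Ioc _ _)
    (continuous_reducedSig hp.le (by linarith)).continuousOn fun u hu ↦ ?_
  rw [interior_Ioc] at hu
  rw [(hasDerivAt_reducedSig hσ hτ hp hpq hu.1).deriv]
  have hgap := Real.rpow_lt_rpow hu.1.le hu.2 (sub_pos.2 hpq)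
  exact mul_pos (mul_pos (Real.rpow_pos_of_pos hu.1 _) (mul_pos hτ (by linarith))) (sub_pos.2 hgap)

theorem strictAntiOn_reducedSig (hσ : 0 < σ) (hτ : 0 < τ) (hp : 1 < p) (hpq : p < q) :
    StrictAntiOn (reducedSig σ τ p q) (Ici (reducedSigArgmax σ τ p q)) := by
  refine strictAntiOn_of_deriv_neg (convex_Ici _)
    (continuous_reducedSig hp.le (by linarith)).continuousOn fun u hu ↦ ?_
  rw [interior_Ici] at hu
  have hu₀ : 0 < u := (reducedSigArgmax_pos hσ hτ hp hpq).trans hu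
  rw [(hasDerivAt_reducedSig hσ hτ hp hpq hu₀).deriv]
  have hgap := Real.rpow_lt_rpow (reducedSigArgmax_pos hσ hτ hp hpq).le hu (sub_pos.2 hpq)
  exact mul_neg_of_pos_of_neg (mul_pos (Real.rpow_pos_of_pos hu₀ _) (mul_pos hτ (by linarith)))
    (sub_neg.2 hgap)

theorem reducedSig_reducedSigArgmax (hσ : 0 < σ) (hτ : 0 < τ) (hp : 1 < p) (hpq : p < q) :
    reducedSig σ τ p q (reducedSigArgmax σ τ p q) =
      σ * ((q - p) / (q - 1)) * (σ * (p - 1) / (τ * (q - 1))) ^ ((p - 1) / (q - p)) := by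
  have hratio : 0 < σ * (p - 1) / (τ * (q - 1)) :=
    div_pos (mul_pos hσ (by linarith)) (mul_pos hτ (by linarith))
  rw [reducedSig_eq_mul (reducedSigArgmax_pos hσ hτ hp hpq), reducedSigArgmax_rpow hσ hτ hp hpq,
    reducedSigArgmax, ← Real.rpow_mul hratio.le, inv_mul_eq_div]
  have : q - 1 ≠ 0 := by linarith
  field_simp
  ring

end reducedSig

theorem tau_le_sigma (n : ℕ) {p q : ℝ} (hp : -1 < p) (hpq : p ≤ q) :
    tau n q ≤ sigma n p := by
  rw [tau, sigma, sub_le_sub_iff_right]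
  exact div_le_div_of_nonneg_left n.cast_nonneg (by linarith) (by linarith)

section Sig

variable {n : ℕ} {ω p q u : ℝ}

theorem Sig_eq_mul_reducedSig (hu : 0 < u) :
    Sig n ω p q u = 2 * u ^ 2 * (reducedSig (sigma n p) (tau n q) p q u - ω) := by
  have hsplit (r : ℝ) : u ^ (r + 1) = u ^ 2 * u ^ (r - 1) := by
    rw [← Real.rpow_natCast, ← Real.rpow_add hu]
    congr 1
    push_cast
    ring
  rw [Sig, reducedSig, hsplit p, hsplit q]
  ring

theorem Sig_neg_iff (hu : 0 < u) :
    Sig n ω p q u < 0 ↔ reducedSig (sigma n p) (tau n q) p q u < ω := by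
  rw [Sig_eq_mul_reducedSig hu, ← smul_eq_mul, smul_neg_iff_of_pos_left (by positivity), sub_neg]

theorem Sig_pos_iff (hu : 0 < u) :
    0 < Sig n ω p q u ↔ ω < reducedSig (sigma n p) (tau n q) p q u := by
  rw [Sig_eq_mul_reducedSig hu, mul_pos_iff_of_pos_left (by positivity), sub_pos]

end Sig

theorem Sigma_sign_iff_general (p q ω : ℝ) (n : ℕ)
    (hp : 1 < p) (hpq : p < q) (hω : 0 < ω) (hτ : 0 < tau n q) :
    (∃ B C : ℝ, 0 < B ∧ B < C ∧
      (∀ u, 0 < u → u < B → Sig n ω p q u < 0) ∧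
      (∀ u, B < u → u < C → 0 < Sig n ω p q u) ∧
      (∀ u, C < u → Sig n ω p q u < 0)) ↔
    ω < omegaSig n p q := by
  have hσ : 0 < sigma n p := hτ.trans_le (tau_le_sigma n (by linarith) hpq.le)
  change CrossesTwice (Sig n ω p q) 0 ↔ _
  rw [CrossesTwice.congr fun u hu ↦ ⟨Sig_neg_iff hu, Sig_pos_iff hu⟩,
    crossesTwice_iff_lt_of_unimodal (reducedSigArgmax_pos hσ hτ hp hpq)
      (continuous_reducedSig hp.le (hp.trans hpq).le).continuousOn
      (strictMonoOn_reducedSig hσ hτ hp hpq) (strictAntiOn_reducedSig hσ hτ hp hpq)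
      (eventually_reducedSig_lt_nhdsGT_zero hp hpq hω)
      ((tendsto_reducedSig_atTop hτ hp hpq).eventually (eventually_lt_atBot ω)),
    reducedSig_reducedSigArgmax hσ hτ hp hpq, omegaSig]

/-- For `τ > 0`, there exist `0 < B < C` with `Σ < 0` on `(0,B)`, `Σ > 0` on `(B,C)` and
`Σ < 0` on `(C,∞)` if and only if `ω < ω_{σ,τ,p,q}`. -/
theorem Sigma_sign_iff (p q ω : ℝ) (n : ℕ) (hn : 1 ≤ n)
    (hp : 1 < p) (hpq : p < q) (hω : 0 < ω) (hτ : 0 < tau n q) :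
    (∃ B C : ℝ, 0 < B ∧ B < C ∧
      (∀ u, 0 < u → u < B → Sig n ω p q u < 0) ∧
      (∀ u, B < u → u < C → 0 < Sig n ω p q u) ∧
      (∀ u, C < u → Sig n ω p q u < 0)) ↔
    ω < omegaSig n p q :=
  Sigma_sign_iff_general p q ω n hp hpq hω hτ
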